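/- For any n-dimensional probability vector y and positive integer k, M_k(y) ⊆ T_{k·n^{k-1}}(y). That is, if x^{⊗k} ≺ y^{⊗k}, then there exists a probability vector c of dimension k·n^{k-1} such that x ⊗ c ≺ y ⊗ c. -/

import Mathlib

open Finset

variable {ι κ : Type*}

/-- `eSum x l` is the sum of the `l` largest components of `x`. -/
noncomputable def eSum [Fintype ι] (x : ι → ℝ) (l : ℕ) : ℝ :=
  sSup {r : ℝ | ∃ s : Finset ι, s.card = l ∧ r = ∑ i ∈ s, x i}

/-- Majorization `x ≺ y` for vectors over the same (finite) index type:
`e_l(x) ≤ e_l(y)` for all `1 ≤ l ≤ n - 1`, with equal total sums. -/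
def Maj [Fintype ι] (x y : ι → ℝ) : Prop :=
  (∀ l : ℕ, 1 ≤ l → l < Fintype.card ι → eSum x l ≤ eSum y l) ∧
    ∑ i, x i = ∑ i, y i

/-- A probability vector: nonnegative components summing to 1. -/
def IsProbVec [Fintype ι] (x : ι → ℝ) : Prop :=
  (∀ i, 0 ≤ x i) ∧ ∑ i, x i = 1

/-- Kronecker product of two vectors. -/
def kron (x : ι → ℝ) (c : κ → ℝ) : ι × κ → ℝ := fun p => x p.1 * c p.2

/-- `k`-fold Kronecker power of a vector. -/
def kpow (x : ι → ℝ) (k : ℕ) : (Fin k → ι) → ℝ := fun f => ∏ j, x (f j)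

/-- Direct sum (concatenation) of two vectors. -/
def dsum (x : ι → ℝ) (c : κ → ℝ) : ι ⊕ κ → ℝ := Sum.elim x c

/-- `k`-fold direct sum (concatenation) of `x` with itself. -/
def dpow (x : ι → ℝ) (k : ℕ) : Fin k × ι → ℝ := fun p => x p.2

/-- `x ∈ S°(y)`: all partial-sum inequalities `e_l(x) < e_l(y)` are strict for
`1 ≤ l ≤ n - 1`, and the total sums coincide. -/
def InteriorS [Fintype ι] (x y : ι → ℝ) : Prop :=
  (∀ l : ℕ, 1 ≤ l → l < Fintype.card ι → eSum x l < eSum y l) ∧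
    ∑ i, x i = ∑ i, y i

/-- `d_x`: the number of nonzero components of `x`. -/
noncomputable def dsupp (x : ι → ℝ) : ℕ := Nat.card (Function.support x)

/-- The `α`-Renyi entropy `S^{(α)}(x)`; at `α = 1` it is the Shannon entropy. -/
noncomputable def renyi [Fintype ι] (x : ι → ℝ) (α : ℝ) : ℝ :=
  if α = 1 then -∑ i, x i * Real.logb 2 (x i)
  else (if 0 ≤ α then (1 : ℝ) else -1) / (1 - α) *
    Real.logb 2 (∑ i, if x i = 0 then 0 else x i ^ α)

/-- The Renyi entropy of `x` is not less than that of `y`. -/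
def RenyiGE [Fintype ι] [Fintype κ] (x : ι → ℝ) (y : κ → ℝ) : Prop :=
  (dsupp x > dsupp y ∧ ∀ α : ℝ, 0 ≤ α → renyi y α ≤ renyi x α) ∨
  (dsupp x = dsupp y ∧ ∀ α : ℝ, renyi y α ≤ renyi x α)


/-! Write `k = m + 1` and let `h_j` be the hybrid product `x^{⊗j} ⊗ y^{⊗(l-j)}` of length `l`. The
vector `c` is the uniform mixture of the hybrids `h_0, …, h_m` of length `m`. Inserting a factor `x`
at position `j` turns `h_j` into the hybrid `h_{j+1}` of length `k`, inserting `y` turns it into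
`h_j`; so up to a permutation of coordinates, `x ⊗ c` and `y ⊗ c` are the scaled concatenations of
`h_1, …, h_k` and of `h_0, …, h_{k-1}`. These share `h_1, …, h_{k-1}`, while `h_k = x^{⊗k}` and
`h_0 = y^{⊗k}`; majorization survives adding a common block, scaling and permuting coordinates. -/

section eSum

variable [Fintype ι]

lemma eSum_set_finite (x : ι → ℝ) (l : ℕ) :
    {r : ℝ | ∃ s : Finset ι, s.card = l ∧ r = ∑ i ∈ s, x i}.Finite :=
  ((univ.powersetCard l).image fun s => ∑ i ∈ s, x i).finite_toSet.subset <| by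
    rintro r ⟨s, hs, rfl⟩
    simpa using ⟨s, hs, rfl⟩

lemma sum_le_eSum (x : ι → ℝ) (s : Finset ι) : ∑ i ∈ s, x i ≤ eSum x s.card :=
  le_csSup (eSum_set_finite x s.card).bddAbove ⟨s, rfl, rfl⟩

lemma exists_card_eq_eSum_eq_sum (x : ι → ℝ) {l : ℕ} (hl : l ≤ Fintype.card ι) :
    ∃ s : Finset ι, s.card = l ∧ eSum x l = ∑ i ∈ s, x i := by
  obtain ⟨s, -, hs⟩ := exists_subset_card_eq (s := (univ : Finset ι)) (by simpa using hl)
  exact Set.Nonempty.csSup_mem (s := {r : ℝ | ∃ s : Finset ι, s.card = l ∧ r = ∑ i ∈ s, x i})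
    ⟨_, s, hs, rfl⟩ (eSum_set_finite x l)

lemma eSum_le_of_forall_sum_le {x : ι → ℝ} {l : ℕ} {r : ℝ} (hl : l ≤ Fintype.card ι)
    (h : ∀ s : Finset ι, s.card = l → ∑ i ∈ s, x i ≤ r) : eSum x l ≤ r := by
  obtain ⟨s, hs, he⟩ := exists_card_eq_eSum_eq_sum x hl
  exact he ▸ h s hs

lemma eSum_zero (x : ι → ℝ) : eSum x 0 = 0 :=
  eSum_le_of_forall_sum_le (Nat.zero_le _) (fun s hs => by simp [card_eq_zero.mp hs])
    |>.antisymm (by simpa using sum_le_eSum x ∅)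

lemma eSum_card (x : ι → ℝ) : eSum x (Fintype.card ι) = ∑ i, x i :=
  (eSum_le_of_forall_sum_le le_rfl fun s hs => by rw [eq_univ_of_card s hs]).antisymm
    (by simpa using sum_le_eSum x univ)

lemma eSum_comp_equiv [Fintype κ] (e : κ ≃ ι) (x : ι → ℝ) (l : ℕ) :
    eSum (x ∘ e) l = eSum x l := by
  unfold eSum
  congr 1
  ext r
  constructor
  · rintro ⟨s, hs, rfl⟩
    exact ⟨s.map e.toEmbedding, by simp [hs], by simp⟩
  · rintro ⟨s, hs, rfl⟩
    exact ⟨s.map e.symm.toEmbedding, by simp [hs], by simp⟩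

lemma eSum_const_mul {t : ℝ} (ht : 0 ≤ t) (x : ι → ℝ) {l : ℕ} (hl : l ≤ Fintype.card ι) :
    eSum (fun i => t * x i) l = t * eSum x l := by
  refine le_antisymm (eSum_le_of_forall_sum_le hl fun s hs => ?_) ?_
  · rw [← mul_sum, ← hs]
    exact mul_le_mul_of_nonneg_left (sum_le_eSum x s) ht
  · obtain ⟨s, hs, he⟩ := exists_card_eq_eSum_eq_sum x hl
    rw [he, mul_sum, ← hs]
    exact sum_le_eSum _ s

end eSum

namespace Maj

variable [Fintype ι] {x y : ι → ℝ}

lemma eSum_le (h : Maj x y) {l : ℕ} (hl : l ≤ Fintype.card ι) : eSum x l ≤ eSum y l := by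
  rcases Nat.eq_zero_or_pos l with rfl | hl₀
  · simp [eSum_zero]
  rcases hl.eq_or_lt with rfl | hlt
  · rw [eSum_card, eSum_card, h.2]
  · exact h.1 l hl₀ hlt

lemma comp_equiv [Fintype κ] (h : Maj x y) (e e' : κ ≃ ι) : Maj (x ∘ e) (y ∘ e') := by
  refine ⟨fun l hl₀ hl => ?_, ?_⟩
  · rw [eSum_comp_equiv, eSum_comp_equiv]
    exact h.1 l hl₀ (Fintype.card_congr e ▸ hl)
  · simpa only [Function.comp_apply, e.sum_comp, e'.sum_comp] using h.2

lemma const_mul (h : Maj x y) {t : ℝ} (ht : 0 ≤ t) :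
    Maj (fun i => t * x i) (fun i => t * y i) := by
  refine ⟨fun l hl₀ hl => ?_, by rw [← mul_sum, ← mul_sum, h.2]⟩
  rw [eSum_const_mul ht x hl.le, eSum_const_mul ht y hl.le]
  exact mul_le_mul_of_nonneg_left (h.1 l hl₀ hl) ht

lemma dsum_right [Fintype κ] (h : Maj x y) (z : κ → ℝ) : Maj (dsum x z) (dsum y z) := by
  refine ⟨fun l _ hl => eSum_le_of_forall_sum_le hl.le fun s hs => ?_,
    by simp only [dsum, Fintype.sum_sum_type, Sum.elim_inl, Sum.elim_inr, h.2]⟩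
  have hleft : s.toLeft.card ≤ Fintype.card ι := card_le_univ _
  obtain ⟨t, ht, hte⟩ := exists_card_eq_eSum_eq_sum y hleft
  calc ∑ i ∈ s, dsum x z i = ∑ i ∈ s.toLeft, x i + ∑ j ∈ s.toRight, z j := by
        conv_lhs => rw [← s.toLeft_disjSum_toRight]
        rw [sum_disjSum]
        rfl
    _ ≤ ∑ i ∈ t, y i + ∑ j ∈ s.toRight, z j := by
        rw [← hte]
        gcongr
        exact (sum_le_eSum x _).trans (h.eSum_le hleft)
    _ = ∑ i ∈ t.disjSum s.toRight, dsum y z i := by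
        rw [sum_disjSum]
        rfl
    _ ≤ eSum (dsum y z) l := by
        convert sum_le_eSum (dsum y z) (t.disjSum s.toRight)
        rw [card_disjSum, ht, ← hs, card_toLeft_add_card_toRight]

end Maj

/-- Both sides consist of the common blocks `v 1, …, v m` and one extra block, `v (m + 1)` and `v 0`
respectively. -/
lemma maj_shift {G : Type*} [Fintype G] {m : ℕ} (v : ℕ → G → ℝ) (h : Maj (v (m + 1)) (v 0)) :
    Maj (fun p : Fin (m + 1) × G => v (p.1 + 1) p.2) (fun p => v p.1 p.2) := by
  have := (h.dsum_right fun p : Fin m × G => v (p.1 + 1) p.2).comp_equiv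
    ((finSuccEquivLast.prodCongr (Equiv.refl G)).trans optionProdEquiv)
    (((finSuccEquiv m).prodCongr (Equiv.refl G)).trans optionProdEquiv)
  convert this using 1 <;> funext ⟨j, g⟩
  · induction j using Fin.lastCases <;> simp [dsum]
  · induction j using Fin.cases <;> simp [dsum]

section hybrid

variable {k : ℕ}

lemma val_succAbove_lt_iff (j : Fin (k + 1)) (i : Fin k) :
    (j.succAbove i : ℕ) < j ↔ (i : ℕ) < j := by
  rw [← Fin.lt_def, Fin.succAbove_lt_iff_castSucc_lt, Fin.lt_def, Fin.val_castSucc]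

lemma val_succAbove_lt_succ_iff (j : Fin (k + 1)) (i : Fin k) :
    (j.succAbove i : ℕ) < j + 1 ↔ (i : ℕ) < j := by
  have := Fin.val_ne_of_ne (j.succAbove_ne i)
  rw [← val_succAbove_lt_iff]
  omega

def hybrid (x y : ι → ℝ) (j : ℕ) (g : Fin k → ι) : ℝ :=
  ∏ i : Fin k, if (i : ℕ) < j then x (g i) else y (g i)

lemma hybrid_zero (x y : ι → ℝ) : hybrid x y 0 = kpow y k := by
  funext g
  simp [hybrid, kpow]

lemma hybrid_of_le (x y : ι → ℝ) {j : ℕ} (hj : k ≤ j) : hybrid x y j = kpow x k := by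
  funext g
  exact prod_congr rfl fun i _ => if_pos (by omega)

lemma hybrid_insertNth (x y : ι → ℝ) (j : Fin (k + 1)) (a : ι) (f : Fin k → ι) :
    hybrid x y j (Fin.insertNth j a f) = y a * hybrid x y j f := by
  simp only [hybrid, Fin.prod_univ_succAbove _ j, Fin.insertNth_apply_same,
    Fin.insertNth_apply_succAbove, val_succAbove_lt_iff, lt_irrefl, if_false]

lemma hybrid_succ_insertNth (x y : ι → ℝ) (j : Fin (k + 1)) (a : ι) (f : Fin k → ι) :
    hybrid x y (j + 1) (Fin.insertNth j a f) = x a * hybrid x y j f := by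
  simp only [hybrid, Fin.prod_univ_succAbove _ j, Fin.insertNth_apply_same,
    Fin.insertNth_apply_succAbove, val_succAbove_lt_succ_iff, Nat.lt_succ_self, if_true]

variable [Fintype ι]

lemma isProbVec_hybrid {x y : ι → ℝ} (hx : IsProbVec x) (hy : IsProbVec y) (j : ℕ) :
    IsProbVec (hybrid x y j : (Fin k → ι) → ℝ) := by
  refine ⟨fun g => prod_nonneg fun i _ => ?_, ?_⟩
  · split_ifs
    exacts [hx.1 _, hy.1 _]
  · calc ∑ g, hybrid x y j g = ∏ i : Fin k, ∑ a, if (i : ℕ) < j then x a else y a :=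
          (Fintype.prod_sum fun (i : Fin k) a => if (i : ℕ) < j then x a else y a).symm
      _ = 1 := prod_eq_one fun i _ => by split_ifs; exacts [hx.2, hy.2]

end hybrid

lemma isProbVec_uniform_mix {J G : Type*} [Fintype J] [Nonempty J] [Fintype G] (v : J → G → ℝ)
    (hv : ∀ j, IsProbVec (v j)) :
    IsProbVec fun p : J × G => (Fintype.card J : ℝ)⁻¹ * v p.1 p.2 := by
  refine ⟨fun p => mul_nonneg (by positivity) ((hv p.1).1 p.2), ?_⟩
  simp only [Fintype.sum_prod_type, ← mul_sum, (hv _).2, mul_one, sum_const, card_univ,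
    nsmul_eq_mul]
  exact inv_mul_cancel₀ (by simp)

def insertNthProdEquiv (ι : Type*) (m : ℕ) :
    ι × Fin (m + 1) × (Fin m → ι) ≃ Fin (m + 1) × (Fin (m + 1) → ι) where
  toFun p := (p.2.1, Fin.insertNth p.2.1 p.1 p.2.2)
  invFun q := (q.2 q.1, q.1, Fin.removeNth q.1 q.2)
  left_inv p := by simp
  right_inv q := by simp

variable [Fintype ι]

theorem exists_isProbVec_maj_kron_of_maj_kpow {m : ℕ} {x y : ι → ℝ} (hx : IsProbVec x)
    (hy : IsProbVec y) (h : Maj (kpow x (m + 1)) (kpow y (m + 1))) :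
    ∃ c : Fin (m + 1) × (Fin m → ι) → ℝ, IsProbVec c ∧ Maj (kron x c) (kron y c) := by
  set t : ℝ := (Fintype.card (Fin (m + 1)) : ℝ)⁻¹
  refine ⟨fun p => t * hybrid x y p.1 p.2,
    isProbVec_uniform_mix (fun j : Fin (m + 1) => hybrid x y j) fun j =>
      isProbVec_hybrid hx hy j, ?_⟩
  have hshift := (maj_shift (fun j => hybrid x y j) (by rwa [hybrid_of_le x y le_rfl,
    hybrid_zero])).const_mul (t := t) (by positivity)
  convert hshift.comp_equiv (insertNthProdEquiv ι m) (insertNthProdEquiv ι m) using 1 <;>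
    funext ⟨a, j, f⟩
  · simp only [kron, insertNthProdEquiv, Equiv.coe_fn_mk, Function.comp_apply,
      hybrid_succ_insertNth]
    ring
  · simp only [kron, insertNthProdEquiv, Equiv.coe_fn_mk, Function.comp_apply, hybrid_insertNth]
    ring

theorem exists_isProbVec_maj_kron_of_equiv {κ' : Type*} [Fintype κ] [Fintype κ'] (e : κ' ≃ κ)
    {x y : ι → ℝ} (h : ∃ c : κ → ℝ, IsProbVec c ∧ Maj (kron x c) (kron y c)) :
    ∃ c : κ' → ℝ, IsProbVec c ∧ Maj (kron x c) (kron y c) := by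
  obtain ⟨c, ⟨hc₀, hc₁⟩, hc⟩ := h
  exact ⟨c ∘ e, ⟨fun i => hc₀ _, by rwa [← e.sum_comp] at hc₁⟩,
    hc.comp_equiv ((Equiv.refl ι).prodCongr e) ((Equiv.refl ι).prodCongr e)⟩

/-- `M_k(y) ⊆ T_{k·n^{k-1}}(y)`: if `x^{⊗k} ≺ y^{⊗k}` then there is a probability
vector `c` of dimension `k·n^{k-1}` with `x ⊗ c ≺ y ⊗ c`. -/
theorem stmt2 {n : ℕ} (k : ℕ) (hk : 1 ≤ k) (x y : Fin n → ℝ)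
    (hx : IsProbVec x) (hy : IsProbVec y)
    (h : Maj (kpow x k) (kpow y k)) :
    ∃ c : Fin (k * n ^ (k - 1)) → ℝ, IsProbVec c ∧ Maj (kron x c) (kron y c) := by
  obtain ⟨m, rfl⟩ : ∃ m, k = m + 1 := ⟨k - 1, by omega⟩
  exact exists_isProbVec_maj_kron_of_equiv (Fintype.equivOfCardEq (by simp))
    (exists_isProbVec_maj_kron_of_maj_kpow hx hy h)
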